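/- Assuming every worm is consistent with GLP_Λ (irreflexivity of <_α), each worm is equivalent in GLP_Λ to a unique worm in worm normal form: if B and C are both in WNF and GLP_Λ proves A ↔ B and A ↔ C, then B = C. -/

import Mathlib

inductive Formula (L : Type) : Type where
  | bot : Formula L
  | var : Nat → Formula L
  | imp : Formula L → Formula L → Formula L
  | box : L → Formula L → Formula L

namespace Formula

variable {L : Type}

def neg (φ : Formula L) : Formula L := imp φ bot
def top : Formula L := neg bot
def and (φ ψ : Formula L) : Formula L := neg (imp φ ψ.neg)
def or (φ ψ : Formula L) : Formula L := imp φ.neg ψ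
def iff (φ ψ : Formula L) : Formula L := (imp φ ψ).and (imp ψ φ)
def dia (α : L) (φ : Formula L) : Formula L := neg (box α φ.neg)

end Formula

open Formula

/-- Provability in the polymodal provability logic `GLP_Λ` over a linear order. -/
inductive GLP {L : Type} [LinearOrder L] : Formula L → Prop where
  | k1 : ∀ φ ψ : Formula L, GLP (φ.imp (ψ.imp φ))
  | k2 : ∀ φ ψ χ : Formula L, GLP ((φ.imp (ψ.imp χ)).imp ((φ.imp ψ).imp (φ.imp χ)))
  | k3 : ∀ φ ψ : Formula L, GLP ((φ.neg.imp ψ.neg).imp (ψ.imp φ))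
  | dist : ∀ (α : L) (φ ψ : Formula L), GLP ((Formula.box α (φ.imp ψ)).imp ((Formula.box α φ).imp (Formula.box α ψ)))
  | lob : ∀ (α : L) (φ : Formula L), GLP ((Formula.box α ((Formula.box α φ).imp φ)).imp (Formula.box α φ))
  | trans : ∀ (α β : L) (φ : Formula L), α ≤ β → GLP ((Formula.box α φ).imp (Formula.box β (Formula.box α φ)))
  | negintro : ∀ (α β : L) (φ : Formula L), α < β → GLP ((dia α φ).imp (Formula.box β (dia α φ)))
  | mono : ∀ (α β : L) (φ : Formula L), α ≤ β → GLP ((Formula.box α φ).imp (Formula.box β φ))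
  | mp : ∀ φ ψ : Formula L, GLP (φ.imp ψ) → GLP φ → GLP ψ
  | nec : ∀ (α : L) (φ : Formula L), GLP φ → GLP (Formula.box α φ)

/-- The worm (iterated consistency statement) associated to a list of modalities. -/
def worm {L : Type} : List L → Formula L
  | [] => Formula.top
  | α :: w => Formula.dia α (worm w)

/-- `Lt α A B` iff `GLP ⊢ B → ⟨α⟩A`. -/
def Lt {L : Type} [LinearOrder L] (α : L) (A B : List L) : Prop :=
  GLP ((worm B).imp (Formula.dia α (worm A)))

def Le {L : Type} [LinearOrder L] (α : L) (A B : List L) : Prop :=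
  Lt α A B ∨ A = B

/-- Join a list of blocks, separating consecutive blocks by the modality `α`. -/
def joinSep {L : Type} (α : L) : List (List L) → List L
  | [] => []
  | [p] => p
  | p :: ps => p ++ α :: joinSep α ps

/-- Worm normal form. -/
inductive WNF {L : Type} [LinearOrder L] [SuccOrder L] : List L → Prop where
  | nil : WNF []
  | node (α : L) (parts : List (List L))
      (hlen : 2 ≤ parts.length)
      (hmods : ∀ p ∈ parts, ∀ β ∈ p, α < β)
      (hwnf : ∀ p ∈ parts, WNF p)
      (hord : parts.Chain' (Le (Order.succ α)))
      : WNF (joinSep α parts)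

/-!
By irreflexivity it suffices to show that two distinct worms in normal form, all of whose
modalities are `≥ α`, are strictly `<_α`-comparable. Write both at the lower of their two
minimal modalities `β` as `β`-separated block lists (the worm with the higher minimum is a
single block) and compare the blocks from the right. If one list is a suffix of the other,
dropping the extra leading blocks gives `<_β`. Otherwise they are `A p R` and `B q R` with
`p ≠ q`, say `p <_{β+1} q` by induction; then `q` proves `⟨β+1⟩r` for every block `r` of `A p`
(they are `≤_{β+1} p`), and since `⟨β⟩T` is `[β+1]`-stable, `⟨β+1⟩r ∧ ⟨β⟩T`
proves `⟨β⟩(r β T)`; folding this along `A p` shows that `q β R` proves `⟨β⟩(A p R)`.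
-/

namespace List

variable {α : Type*}

theorem prefix_or_prefix_or_exists_ne (l₁ l₂ : List α) :
    l₁ <+: l₂ ∨ l₂ <+: l₁ ∨
      ∃ (r a b : List α) (x y : α), x ≠ y ∧ l₁ = r ++ x :: a ∧ l₂ = r ++ y :: b := by
  induction l₁ generalizing l₂ with
  | nil => exact Or.inl nil_prefix
  | cons x l₁ ih =>
    cases l₂ with
    | nil => exact Or.inr (Or.inl nil_prefix)
    | cons y l₂ =>
      by_cases hxy : x = y
      · subst hxy
        rcases ih l₂ with h | h | ⟨r, a, b, x', y', hne, rfl, rfl⟩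
        · exact Or.inl (prefix_cons_inj x |>.2 h)
        · exact Or.inr (Or.inl (prefix_cons_inj x |>.2 h))
        · exact Or.inr (Or.inr ⟨x :: r, a, b, x', y', hne, rfl, rfl⟩)
      · exact Or.inr (Or.inr ⟨[], l₁, l₂, x, y, hxy, rfl, rfl⟩)

theorem suffix_or_suffix_or_exists_ne (l₁ l₂ : List α) :
    l₁ <:+ l₂ ∨ l₂ <:+ l₁ ∨
      ∃ (a b r : List α) (x y : α), x ≠ y ∧ l₁ = a ++ x :: r ∧ l₂ = b ++ y :: r := by
  rcases prefix_or_prefix_or_exists_ne l₁.reverse l₂.reverse with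
    h | h | ⟨r, a, b, x, y, hne, h₁, h₂⟩
  · exact Or.inl (reverse_prefix.1 h)
  · exact Or.inr (Or.inl (reverse_prefix.1 h))
  · refine Or.inr (Or.inr ⟨a.reverse, b.reverse, r.reverse, x, y, hne, ?_, ?_⟩)
    · simpa using congrArg reverse h₁
    · simpa using congrArg reverse h₂

end List

namespace GLP

variable {L : Type} [LinearOrder L]

/-- Derivability from hypotheses. Necessitation is not a rule here, which is what makes the
deduction theorem `Entails.deduction` hold. -/
inductive Entails : List (Formula L) → Formula L → Prop
  | hyp {Γ φ} : φ ∈ Γ → Entails Γ φ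
  | thm {Γ φ} : GLP φ → Entails Γ φ
  | mp {Γ φ ψ} : Entails Γ (φ.imp ψ) → Entails Γ φ → Entails Γ ψ

theorem imp_self (φ : Formula L) : GLP (φ.imp φ) :=
  mp _ _ (mp _ _ (k2 φ (φ.imp φ) φ) (k1 φ (φ.imp φ))) (k1 φ φ)

namespace Entails

theorem hyp₀ {Γ : List (Formula L)} {φ : Formula L} : Entails (φ :: Γ) φ :=
  hyp List.mem_cons_self

theorem hyp₁ {Γ : List (Formula L)} {φ χ : Formula L} : Entails (χ :: φ :: Γ) φ :=
  hyp (List.mem_cons_of_mem _ List.mem_cons_self)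

theorem hyp₂ {Γ : List (Formula L)} {φ χ χ' : Formula L} :
    Entails (χ :: χ' :: φ :: Γ) φ :=
  hyp (List.mem_cons_of_mem _ (List.mem_cons_of_mem _ List.mem_cons_self))

theorem deduction {Γ : List (Formula L)} {φ ψ : Formula L} (h : Entails (φ :: Γ) ψ) :
    Entails Γ (φ.imp ψ) := by
  generalize hΔ : φ :: Γ = Δ at h
  induction h with
  | hyp hm =>
    subst hΔ
    rcases List.mem_cons.1 hm with rfl | hm
    · exact thm (imp_self _)
    · exact mp (thm (k1 _ _)) (hyp hm)
  | thm h => exact mp (thm (k1 _ _)) (thm h)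
  | mp _ _ ih₁ ih₂ => exact mp (mp (thm (k2 _ _ _)) ih₁) ih₂

theorem toGLP {φ : Formula L} (h : Entails [] φ) : GLP φ := by
  generalize hΔ : ([] : List (Formula L)) = Δ at h
  induction h with
  | hyp hm => subst hΔ; simp at hm
  | thm h => exact h
  | mp _ _ ih₁ ih₂ => exact GLP.mp _ _ ih₁ ih₂

end Entails

open Entails

theorem imp_trans {φ ψ χ : Formula L} (h₁ : GLP (φ.imp ψ)) (h₂ : GLP (ψ.imp χ)) :
    GLP (φ.imp χ) :=
  (deduction (Entails.mp (thm h₂) (Entails.mp (thm h₁) hyp₀))).toGLP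

theorem top : GLP (Formula.top : Formula L) := imp_self Formula.bot

theorem imp_top (φ : Formula L) : GLP (φ.imp Formula.top) := mp _ _ (k1 _ _) top

theorem imp_neg_neg (φ : Formula L) : GLP (φ.imp φ.neg.neg) :=
  (deduction (deduction (Entails.mp (φ := φ) hyp₀ hyp₁))).toGLP

theorem neg_neg_imp (φ : Formula L) : GLP (φ.neg.neg.imp φ) :=
  mp _ _ (k3 φ φ.neg.neg) (imp_neg_neg φ.neg)

theorem Entails.byContradiction {Γ : List (Formula L)} {φ : Formula L}
    (h : Entails (φ.neg :: Γ) Formula.bot) : Entails Γ φ :=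
  Entails.mp (thm (neg_neg_imp φ)) h.deduction

theorem bot_imp (φ : Formula L) : GLP (Formula.bot.imp φ) :=
  (deduction (byContradiction hyp₁)).toGLP

theorem imp_imp_and (φ ψ : Formula L) : GLP (φ.imp (ψ.imp (φ.and ψ))) :=
  (deduction (deduction (deduction (Entails.mp (φ := ψ) (Entails.mp (φ := φ) hyp₀ hyp₂)
    hyp₁)))).toGLP

theorem and_imp_left (φ ψ : Formula L) : GLP ((φ.and ψ).imp φ) := by
  have hneg : GLP (φ.neg.imp (φ.imp ψ.neg)) :=
    (deduction (deduction (Entails.mp (thm (bot_imp ψ.neg))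
      (Entails.mp (φ := φ) hyp₁ hyp₀)))).toGLP
  exact (deduction (byContradiction (Entails.mp (φ := φ.imp ψ.neg) hyp₁
    (Entails.mp (thm hneg) hyp₀)))).toGLP

theorem and_imp_right (φ ψ : Formula L) : GLP ((φ.and ψ).imp ψ) :=
  (deduction (byContradiction (Entails.mp (φ := φ.imp ψ.neg) hyp₁
    (Entails.mp (thm (k1 ψ.neg φ)) hyp₀)))).toGLP

theorem imp_and {φ ψ χ : Formula L} (h₁ : GLP (φ.imp ψ)) (h₂ : GLP (φ.imp χ)) :
    GLP (φ.imp (ψ.and χ)) :=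
  (deduction (Entails.mp (Entails.mp (thm (imp_imp_and ψ χ)) (Entails.mp (thm h₁) hyp₀))
    (Entails.mp (thm h₂) hyp₀))).toGLP

theorem neg_imp_neg {φ ψ : Formula L} (h : GLP (φ.imp ψ)) : GLP (ψ.neg.imp φ.neg) :=
  (deduction (deduction (Entails.mp (φ := ψ) hyp₁ (Entails.mp (thm h) hyp₀)))).toGLP

theorem iff_mp {φ ψ : Formula L} (h : GLP (φ.iff ψ)) : GLP (φ.imp ψ) :=
  mp _ _ (and_imp_left _ _) h

theorem iff_mpr {φ ψ : Formula L} (h : GLP (φ.iff ψ)) : GLP (ψ.imp φ) :=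
  mp _ _ (and_imp_right _ _) h

theorem box_imp_box (α : L) {φ ψ : Formula L} (h : GLP (φ.imp ψ)) :
    GLP ((box α φ).imp (box α ψ)) :=
  mp _ _ (dist α φ ψ) (nec α _ h)

theorem dia_imp_dia (α : L) {φ ψ : Formula L} (h : GLP (φ.imp ψ)) :
    GLP ((dia α φ).imp (dia α ψ)) :=
  neg_imp_neg (box_imp_box α (neg_imp_neg h))

theorem dia_imp_dia_of_le {α β : L} (φ : Formula L) (hαβ : α ≤ β) :
    GLP ((dia β φ).imp (dia α φ)) :=
  neg_imp_neg (mono α β φ.neg hαβ)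

theorem dia_dia_imp_dia (α : L) (φ : Formula L) :
    GLP ((dia α (dia α φ)).imp (dia α φ)) :=
  neg_imp_neg (imp_trans (GLP.trans α α φ.neg le_rfl) (box_imp_box α (imp_neg_neg _)))

theorem dia_and_box_imp (α : L) (φ ψ : Formula L) :
    GLP (((dia α φ).and (box α ψ)).imp (dia α (φ.and ψ))) := by
  have hψ : GLP (ψ.imp ((φ.and ψ).neg.imp φ.neg)) :=
    (deduction (deduction (deduction (Entails.mp (φ := φ.and ψ) hyp₁
      (Entails.mp (Entails.mp (thm (imp_imp_and φ ψ)) hyp₀) hyp₂))))).toGLP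
  have hbox : GLP ((box α ψ).imp ((box α (φ.and ψ).neg).imp (box α φ.neg))) :=
    imp_trans (box_imp_box α hψ) (dist α _ _)
  exact (deduction (deduction (Entails.mp
    (Entails.mp (thm (and_imp_left (dia α φ) (box α ψ))) hyp₁)
    (Entails.mp (Entails.mp (thm hbox)
      (Entails.mp (thm (and_imp_right (dia α φ) (box α ψ))) hyp₁)) hyp₀)))).toGLP

end GLP

open GLP

section Worms

variable {L : Type} [LinearOrder L]

theorem worm_append_imp (A B : List L) : GLP ((worm (A ++ B)).imp (worm A)) := by
  induction A with
  | nil => exact imp_top _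
  | cons a A ih => exact dia_imp_dia a ih

theorem worm_append_cons_imp_dia {β : L} {A : List L} (B : List L) (hA : ∀ a ∈ A, β ≤ a) :
    GLP ((worm (A ++ β :: B)).imp (dia β (worm B))) := by
  induction A with
  | nil => exact imp_self _
  | cons a A ih =>
    exact imp_trans (dia_imp_dia a (ih fun x hx => hA x (.tail _ hx)))
      (imp_trans (dia_imp_dia_of_le _ (hA a (.head _))) (dia_dia_imp_dia β _))

theorem worm_and_dia_imp {β : L} {A : List L} (B : List L) (hA : ∀ a ∈ A, β < a) :
    GLP (((worm A).and (dia β (worm B))).imp (worm (A ++ β :: B))) := by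
  induction A with
  | nil => exact and_imp_right _ _
  | cons a A ih =>
    -- `⟨β⟩B` is `[a]`-stable since `β < a`, so it can be moved under `⟨a⟩`.
    have hstable : GLP (((worm (a :: A)).and (dia β (worm B))).imp
        ((dia a (worm A)).and (box a (dia β (worm B))))) :=
      imp_and (and_imp_left _ _)
        (imp_trans (and_imp_right _ _) (negintro β a _ (hA a (.head _))))
    exact imp_trans (imp_trans hstable (dia_and_box_imp a _ _))
      (dia_imp_dia a (ih fun x hx => hA x (.tail _ hx)))

end Worms

section Order

variable {L : Type} [LinearOrder L] {α γ : L} {A B C : List L}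

theorem Lt.trans (h₁ : Lt γ A B) (h₂ : Lt γ B C) : Lt γ A C :=
  imp_trans h₂ (imp_trans (dia_imp_dia γ h₁) (dia_dia_imp_dia γ _))

theorem Lt.of_le_modality (hαγ : α ≤ γ) (h : Lt γ A B) : Lt α A B :=
  imp_trans h (dia_imp_dia_of_le _ hαγ)

theorem Lt.of_prefix {B' : List L} (h : Lt α A B) (hB : B <+: B') : Lt α A B' := by
  obtain ⟨t, rfl⟩ := hB
  exact imp_trans (worm_append_imp B t) h

theorem Le.trans_lt (h₁ : Le γ A B) (h₂ : Lt γ B C) : Lt γ A C := by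
  rcases h₁ with h₁ | rfl
  exacts [h₁.trans h₂, h₂]

theorem Lt.trans_le (h₁ : Lt γ A B) (h₂ : Le γ B C) : Lt γ A C := by
  rcases h₂ with h₂ | rfl
  exacts [h₁.trans h₂, h₁]

theorem Le.trans (h₁ : Le γ A B) (h₂ : Le γ B C) : Le γ A C := by
  rcases h₂ with h₂ | rfl
  exacts [Or.inl (h₁.trans_lt h₂), h₁]

instance : Trans (Le γ) (Le γ) (Le γ : List L → List L → Prop) := ⟨Le.trans⟩

theorem nil_lt (hB : B ≠ []) (hαB : ∀ b ∈ B, α ≤ b) : Lt α [] B := by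
  obtain ⟨b, B, rfl⟩ := List.exists_cons_of_ne_nil hB
  exact imp_trans (dia_imp_dia b (imp_top _)) (dia_imp_dia_of_le _ (hαB b (.head _)))

def Comparable (α : L) (A B : List L) : Prop := A = B ∨ Lt α A B ∨ Lt α B A

theorem Comparable.symm (h : Comparable α A B) : Comparable α B A := by
  rcases h with rfl | h | h
  exacts [Or.inl rfl, Or.inr (Or.inr h), Or.inr (Or.inl h)]

theorem Comparable.of_le_modality (hαγ : α ≤ γ) (h : Comparable γ A B) :
    Comparable α A B := by
  rcases h with rfl | h | h
  exacts [Or.inl rfl, Or.inr (Or.inl (h.of_le_modality hαγ)),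
    Or.inr (Or.inr (h.of_le_modality hαγ))]

theorem Le.comparable (h : Le α A B) : Comparable α A B := by
  rcases h with h | rfl
  exacts [Or.inr (Or.inl h), Or.inl rfl]

end Order

section JoinSep

variable {L : Type} {β x : L} {p : List L} {ps qs : List (List L)}

theorem joinSep_cons (hps : ps ≠ []) : joinSep β (p :: ps) = p ++ β :: joinSep β ps := by
  cases ps
  exacts [absurd rfl hps, rfl]

@[simp]
theorem joinSep_singleton : joinSep β [p] = p := rfl

theorem joinSep_append (hps : ps ≠ []) (hqs : qs ≠ []) :
    joinSep β (ps ++ qs) = joinSep β ps ++ β :: joinSep β qs := by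
  induction ps with
  | nil => exact absurd rfl hps
  | cons p ps ih =>
    rcases eq_or_ne ps [] with rfl | hps'
    · exact joinSep_cons hqs
    · rw [List.cons_append, joinSep_cons (by simp [hps']), joinSep_cons hps', ih hps',
        List.append_assoc, List.cons_append]

theorem prefix_joinSep_cons : p <+: joinSep β (p :: ps) := by
  rcases eq_or_ne ps [] with rfl | hps
  · exact List.prefix_refl p
  · rw [joinSep_cons hps]
    exact List.prefix_append _ _

theorem mem_joinSep (hx : x ∈ joinSep β ps) : x = β ∨ ∃ p ∈ ps, x ∈ p := by
  induction ps with
  | nil => simp [joinSep] at hx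
  | cons p ps ih =>
    rcases eq_or_ne ps [] with rfl | hps
    · exact Or.inr ⟨p, .head _, hx⟩
    · rw [joinSep_cons hps, List.mem_append, List.mem_cons] at hx
      rcases hx with hx | hx | hx
      · exact Or.inr ⟨p, .head _, hx⟩
      · exact Or.inl hx
      · rcases ih hx with h | ⟨q, hq, hxq⟩
        exacts [Or.inl h, Or.inr ⟨q, .tail _ hq, hxq⟩]

theorem mem_joinSep_of_two_le (hps : 2 ≤ ps.length) : β ∈ joinSep β ps := by
  match ps, hps with
  | p :: q :: ps, _ => simp [joinSep_cons (List.cons_ne_nil q ps)]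

theorem length_le_length_joinSep (hp : p ∈ ps) : p.length ≤ (joinSep β ps).length := by
  induction ps with
  | nil => simp at hp
  | cons q ps ih =>
    rcases eq_or_ne ps [] with rfl | hps
    · simp_all [joinSep]
    · rw [joinSep_cons hps, List.length_append, List.length_cons]
      rcases List.mem_cons.1 hp with rfl | hp
      · omega
      · have := ih hp
        omega

theorem length_lt_length_joinSep (hp : p ∈ ps) (hps : 2 ≤ ps.length) :
    p.length < (joinSep β ps).length := by
  match ps, hps with
  | q :: r :: ps, _ =>
    rw [joinSep_cons (List.cons_ne_nil r ps), List.length_append, List.length_cons]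
    rcases List.mem_cons.1 hp with rfl | hp
    · omega
    · have := length_le_length_joinSep (β := β) hp
      omega

end JoinSep

section Blocks

variable {L : Type} [LinearOrder L] {β s : L}

theorem append_cons_lt {r T Y : List L} (hβs : β < s) (hr : ∀ x ∈ r, β < x)
    (hrY : Lt s r Y) (hTY : Lt β T Y) : Lt β (r ++ β :: T) Y := by
  have hY : GLP ((worm Y).imp ((dia s (worm r)).and (box s (dia β (worm T))))) :=
    imp_and hrY (imp_trans hTY (negintro β s _ hβs))
  exact imp_trans (imp_trans hY (dia_and_box_imp s _ _))
    (imp_trans (dia_imp_dia_of_le _ hβs.le) (dia_imp_dia β (worm_and_dia_imp T hr)))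

theorem joinSep_append_lt {rs R : List (List L)} {Y : List L} (hβs : β < s) (hrs : rs ≠ [])
    (hmods : ∀ r ∈ rs, ∀ x ∈ r, β < x) (hrsY : ∀ r ∈ rs, Lt s r Y)
    (hRY : R ≠ [] → Lt β (joinSep β R) Y) : Lt β (joinSep β (rs ++ R)) Y := by
  induction rs with
  | nil => exact absurd rfl hrs
  | cons r rs ih =>
    have htail : rs ++ R ≠ [] → Lt β (joinSep β (rs ++ R)) Y := by
      intro h
      rcases eq_or_ne rs [] with rfl | hrs'
      · exact hRY (by simpa using h)
      · exact ih hrs' (fun r hr => hmods r (.tail _ hr)) (fun r hr => hrsY r (.tail _ hr))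
    rw [List.cons_append]
    rcases eq_or_ne (rs ++ R) [] with h | h
    · rw [h]
      exact (hrsY r (.head _)).of_le_modality hβs.le
    · rw [joinSep_cons h]
      exact append_cons_lt hβs (hmods r (.head _)) (hrsY r (.head _)) (htail h)

theorem joinSep_lt_joinSep_append {B R : List (List L)} (hB : B ≠ []) (hR : R ≠ [])
    (hmods : ∀ p ∈ B, ∀ x ∈ p, β ≤ x) : Lt β (joinSep β R) (joinSep β (B ++ R)) := by
  rw [Lt, joinSep_append hB hR]
  refine worm_append_cons_imp_dia _ fun x hx => ?_
  rcases mem_joinSep hx with rfl | ⟨p, hp, hxp⟩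
  exacts [le_rfl, hmods p hp x hxp]

theorem joinSep_le_joinSep_append {B R : List (List L)} (hR : R ≠ [])
    (hmods : ∀ p ∈ B, ∀ x ∈ p, β ≤ x) : Le β (joinSep β R) (joinSep β (B ++ R)) := by
  rcases eq_or_ne B [] with rfl | hB
  exacts [Or.inr rfl, Or.inl (joinSep_lt_joinSep_append hB hR hmods)]

theorem joinSep_lt_of_lt_block {A B R : List (List L)} {p q : List L} (hβs : β < s)
    (hchain : (A ++ p :: R).IsChain (Le s)) (hmodsP : ∀ r ∈ A ++ p :: R, ∀ x ∈ r, β < x)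
    (hmodsQ : ∀ r ∈ B ++ q :: R, ∀ x ∈ r, β ≤ x) (hpq : Lt s p q) :
    Lt β (joinSep β (A ++ p :: R)) (joinSep β (B ++ q :: R)) := by
  have hle : ∀ r ∈ A ++ [p], Le s r p := by
    intro r hr
    rcases List.mem_append.1 hr with hr | hr
    · exact (List.pairwise_append.1 (List.isChain_iff_pairwise.1 hchain)).2.2 r hr p (.head _)
    · exact Or.inr (List.mem_singleton.1 hr)
  have hqR : Lt β (joinSep β ((A ++ [p]) ++ R)) (joinSep β (q :: R)) :=
    joinSep_append_lt hβs (by simp) (fun r hr => hmodsP r (by simp at hr ⊢; tauto))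
      (fun r hr => ((hle r hr).trans_lt hpq).of_prefix prefix_joinSep_cons)
      (fun hR => joinSep_lt_joinSep_append (B := [q]) (by simp) hR
        (by simpa using hmodsQ q (by simp)))
  simpa using hqR.trans_le
    (joinSep_le_joinSep_append (B := B) (by simp) fun r hr => hmodsQ r (by simp [hr]))

variable [SuccOrder L]

theorem comparable_joinSep {P Q : List (List L)} (hP : P ≠ []) (hQ : Q ≠ [])
    (hmodsP : ∀ p ∈ P, ∀ x ∈ p, β < x) (hmodsQ : ∀ q ∈ Q, ∀ x ∈ q, β < x)
    (hchainP : P.IsChain (Le (Order.succ β))) (hchainQ : Q.IsChain (Le (Order.succ β)))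
    (hblocks : ∀ p ∈ P, ∀ q ∈ Q, Comparable (Order.succ β) p q) :
    Comparable β (joinSep β P) (joinSep β Q) := by
  rcases List.suffix_or_suffix_or_exists_ne P Q with
    ⟨B, rfl⟩ | ⟨A, rfl⟩ | ⟨A, B, R, p, q, hpq, rfl, rfl⟩
  · exact (joinSep_le_joinSep_append hP fun r hr x hx =>
      (hmodsQ r (by simp [hr]) x hx).le).comparable
  · exact (joinSep_le_joinSep_append hQ fun r hr x hx =>
      (hmodsP r (by simp [hr]) x hx).le).comparable.symm
  · have hβs : β < Order.succ β := by
      -- one of the two distinct blocks is nonempty, so `β` is not maximal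
      obtain ⟨x, hx⟩ : ∃ x, β < x := by
        rcases p with _ | ⟨x, p⟩
        · obtain ⟨y, q, rfl⟩ := List.exists_cons_of_ne_nil (Ne.symm hpq)
          exact ⟨y, hmodsQ (y :: q) (by simp) y (.head _)⟩
        · exact ⟨x, hmodsP (x :: p) (by simp) x (.head _)⟩
      exact Order.lt_succ_of_not_isMax (not_isMax_of_lt hx)
    rcases hblocks p (by simp) q (by simp) with h | h | h
    · exact absurd h hpq
    · exact Or.inr (Or.inl (joinSep_lt_of_lt_block hβs hchainP hmodsP
        (fun r hr x hx => (hmodsQ r hr x hx).le) h))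
    · exact Or.inr (Or.inr (joinSep_lt_of_lt_block hβs hchainQ hmodsQ
        (fun r hr x hx => (hmodsP r hr x hx).le) h))

end Blocks

section Normal

variable {L : Type} [LinearOrder L] [SuccOrder L]

theorem comparable_joinSep_of_le {βx βy : L} {P Q : List (List L)} (hβ : βx ≤ βy)
    (hlenP : 2 ≤ P.length) (hmodsP : ∀ p ∈ P, ∀ x ∈ p, βx < x)
    (hchainP : P.IsChain (Le (Order.succ βx))) (hY : WNF (joinSep βy Q)) (hQ : Q ≠ [])
    (hmodsQ : ∀ q ∈ Q, ∀ y ∈ q, βy < y) (hwnfQ : ∀ q ∈ Q, WNF q)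
    (hchainQ : Q.IsChain (Le (Order.succ βy)))
    (hsmaller : ∀ p q : List L,
      p.length + q.length < (joinSep βx P).length + (joinSep βy Q).length →
      p ∈ P → WNF q → (∀ y ∈ q, βx < y) → Comparable (Order.succ βx) p q) :
    Comparable βx (joinSep βx P) (joinSep βy Q) := by
  have hP : P ≠ [] := List.ne_nil_of_length_pos (by omega)
  have hsmaller' : ∀ p ∈ P, ∀ q, WNF q → q.length ≤ (joinSep βy Q).length →
      (∀ y ∈ q, βx < y) → Comparable (Order.succ βx) p q := fun p hp q hq hlen hmods =>
    hsmaller p q (by have := length_lt_length_joinSep (β := βx) hp hlenP; omega) hp hq hmods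
  rcases hβ.lt_or_eq with hlt | rfl
  · -- at level `βx` the whole of `joinSep βy Q` is a single block
    have hmodsY : ∀ y ∈ joinSep βy Q, βx < y := by
      intro y hy
      rcases mem_joinSep hy with rfl | ⟨q, hq, hyq⟩
      exacts [hlt, hlt.trans (hmodsQ q hq y hyq)]
    simpa using comparable_joinSep (Q := [joinSep βy Q]) hP (List.cons_ne_nil _ _) hmodsP
      (by simpa using hmodsY) hchainP (List.isChain_singleton _) fun p hp q hq => by
        rw [List.mem_singleton.1 hq]
        exact hsmaller' p hp _ hY le_rfl hmodsY
  · exact comparable_joinSep hP hQ hmodsP hmodsQ hchainP hchainQ fun p hp q hq =>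
      hsmaller' p hp q (hwnfQ q hq) (length_le_length_joinSep hq) (hmodsQ q hq)

theorem WNF.comparable {X Y : List L} (hX : WNF X) (hY : WNF Y) {α : L}
    (hαX : ∀ x ∈ X, α ≤ x) (hαY : ∀ y ∈ Y, α ≤ y) : Comparable α X Y := by
  induction hn : X.length + Y.length using Nat.strong_induction_on generalizing X Y α with
  | _ n ih =>
  have ih' : ∀ (β : L) (p q : List L), p.length + q.length < n → WNF p → WNF q →
      (∀ x ∈ p, β < x) → (∀ y ∈ q, β < y) → Comparable (Order.succ β) p q :=
    fun β p q hlt hp hq hβp hβq => ih _ hlt hp hq (fun x hx => Order.succ_le_of_lt (hβp x hx))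
      (fun y hy => Order.succ_le_of_lt (hβq y hy)) rfl
  cases hX with
  | nil =>
    cases hY with
    | nil => exact Or.inl rfl
    | node βy Q hlenQ _ _ _ =>
      exact Or.inr (Or.inl (nil_lt (List.ne_nil_of_mem (mem_joinSep_of_two_le hlenQ)) hαY))
  | node βx P hlenP hmodsP hwnfP hchainP =>
    cases hY with
    | nil =>
      exact Or.inr (Or.inr (nil_lt (List.ne_nil_of_mem (mem_joinSep_of_two_le hlenP)) hαX))
    | node βy Q hlenQ hmodsQ hwnfQ hchainQ =>
      have hX := WNF.node βx P hlenP hmodsP hwnfP hchainP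
      have hY := WNF.node βy Q hlenQ hmodsQ hwnfQ hchainQ
      rcases le_total βx βy with hβ | hβ
      · exact (comparable_joinSep_of_le hβ hlenP hmodsP hchainP hY
          (List.ne_nil_of_length_pos (by omega)) hmodsQ hwnfQ hchainQ fun p q hpq hp hq =>
          ih' βx p q (by omega) (hwnfP p hp) hq (hmodsP p hp)).of_le_modality
          (hαX _ (mem_joinSep_of_two_le hlenP))
      · exact (comparable_joinSep_of_le hβ hlenQ hmodsQ hchainQ hX
          (List.ne_nil_of_length_pos (by omega)) hmodsP hwnfP hchainP fun q p hqp hq hp =>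
          ih' βy q p (by omega) (hwnfQ q hq) hp (hmodsQ q hq)).symm.of_le_modality
          (hαY _ (mem_joinSep_of_two_le hlenQ))

end Normal

/-- Assuming irreflexivity of the relations `<_α`, worm normal forms are
unique: if `B` and `C` are in WNF and both `GLP`-equivalent to `A`, then
`B = C`. -/
theorem WNF_unique {L : Type} [LinearOrder L] [SuccOrder L]
    (irrefl : ∀ (D : List L) (α : L), ¬ GLP ((worm D).imp (Formula.dia α (worm D))))
    (A B C : List L) (hB : WNF B) (hC : WNF C)
    (h₁ : GLP ((worm A).iff (worm B))) (h₂ : GLP ((worm A).iff (worm C))) :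
    B = C := by
  rcases eq_or_ne (B ++ C) [] with hBC | hBC
  · obtain ⟨rfl, rfl⟩ := List.append_eq_nil_iff.1 hBC
    rfl
  have hmin : ∀ x ∈ B ++ C, (B ++ C).min hBC ≤ x := fun x hx => List.min_le_of_mem hx
  rcases hB.comparable hC (fun x hx => hmin x (List.mem_append_left _ hx))
      (fun x hx => hmin x (List.mem_append_right _ hx)) with h | h | h
  · exact h
  · exact absurd (imp_trans (imp_trans (iff_mpr h₁) (iff_mp h₂)) h) (irrefl B _)
  · exact absurd (imp_trans (imp_trans (iff_mpr h₂) (iff_mp h₁)) h) (irrefl C _)
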